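/- (Rawnsley; exactness of the d̆*-sequence) Fix n and for 0 ≤ q ≤ n write H_{n−q,q} for the corresponding subspace of H^{⊗n}. The sequence 0 → H^{∧n} = H_{0,n} →^{d̆*_{n−1}} H_{1,n−1} →^{d̆*_{n−2}} ⋯ →^{d̆*_0} H_{n,0} = H^{⊙n} → 0 is exact: d̆*_{n−1} is injective, d̆*_0 is surjective, and for every 1 ≤ q ≤ n−1, ker(d̆*_{q−1} : H_{n−q,q} → H_{n−q+1,q−1}) = im(d̆*_q : H_{n−q−1,q+1} → H_{n−q,q}). -/

import Mathlib

open scoped BigOperators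

noncomputable section

variable (F : Type*) [Field F] [CharZero F] (H : Type*) [AddCommGroup H] [Module F H]

/-- The `n`-th tensor power of `H` over `F`. -/
abbrev TP (n : ℕ) : Type _ := PiTensorProduct F (fun _ : Fin n => H)

/-- The action of a permutation `σ ∈ S_n` on the `n`-th tensor power,
permuting the tensor factors. -/
def permMap (n : ℕ) (σ : Equiv.Perm (Fin n)) : TP F H n →ₗ[F] TP F H n :=
  (PiTensorProduct.reindex F (fun _ : Fin n => H) σ).toLinearMap

/-- Identification of tensor powers of equal degrees. -/
def tpCast {m m' : ℕ} (hm : m = m') : TP F H m →ₗ[F] TP F H m' :=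
  (PiTensorProduct.reindex F (fun _ : Fin m => H) (finCongr hm)).toLinearMap

/-- The permutations of `{1, …, n}` moving only positions in `a`. -/
def permsOn (n : ℕ) (a : Finset (Fin n)) : Finset (Equiv.Perm (Fin n)) :=
  Finset.univ.filter fun σ => ∀ i, i ∉ a → σ i = i

/-- `S_a`: symmetrisation over the positions in `a` (the average over all
permutations of the positions in `a`, fixing the other positions). -/
def symOn (n : ℕ) (a : Finset (Fin n)) : TP F H n →ₗ[F] TP F H n :=
  (a.card.factorial : F)⁻¹ • ∑ σ ∈ permsOn n a, permMap F H n σ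

/-- `A_a`: skew-symmetrisation over the positions in `a` (the signed average over
all permutations of the positions in `a`, fixing the other positions). -/
def altOn (n : ℕ) (a : Finset (Fin n)) : TP F H n →ₗ[F] TP F H n :=
  (a.card.factorial : F)⁻¹ • ∑ σ ∈ permsOn n a, (Equiv.Perm.sign σ : ℤ) • permMap F H n σ

/-- The first `k` positions of `{1, …, n}`. -/
def firstSet (n k : ℕ) : Finset (Fin n) := Finset.univ.filter fun i => (i : ℕ) < k

/-- The last `m` positions of `{1, …, n}`. -/
def lastSet (n m : ℕ) : Finset (Fin n) := Finset.univ.filter fun i => n - m ≤ (i : ℕ)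

/-- `H^{⊙a,∧aᶜ}`: the image of `S_a ∘ A_{aᶜ}`, the subspace of `n`-tensors symmetric in
the positions of `a` and skew-symmetric in the positions of `aᶜ`. -/
def Hgen (n : ℕ) (a : Finset (Fin n)) : Submodule F (TP F H n) :=
  LinearMap.range (symOn F H n a ∘ₗ altOn F H n aᶜ)

/-- `H_{k,n-k} = H^{⊙k} ⊗ H^{∧(n-k)}`: the subspace of `n`-tensors symmetric in the
first `k` positions and skew-symmetric in the remaining positions. -/
def Hmix (n k : ℕ) : Submodule F (TP F H n) := Hgen F H n (firstSet n k)

/-- `H^{⊙[k],∧[n-k]}`: the span of the subspaces `H^{⊙a,∧aᶜ}` over all `k`-element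
subsets `a ⊆ {1, …, n}`. -/
def HmixSpan (n k : ℕ) : Submodule F (TP F H n) :=
  ⨆ a ∈ {a : Finset (Fin n) | a.card = k}, Hgen F H n a

/-- The global operator whose restriction to `H_{k,q}` (with `m = q + 1`, `n = k + q`)
is `d̆_q`: skew-symmetrisation of the last `m` positions, scaled by `m`. -/
def dOp (n m : ℕ) : TP F H n →ₗ[F] TP F H n := (m : F) • altOn F H n (lastSet n m)

/-- The global operator whose restriction to `H_{k-1,q+1}` (with `m = k`, `n = k + q`)
is `d̆*_q`: symmetrisation of the first `m` positions, scaled by `m`. -/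
def dStarOp (n m : ℕ) : TP F H n →ₗ[F] TP F H n := (m : F) • symOn F H n (firstSet n m)

/-- The elementary element `h₁⊙…⊙h_k ⊗ x₁∧…∧x_q` of `H_{k,q} ⊆ H^{⊗(k+q)}`. -/
def elem (k q : ℕ) (h : Fin k → H) (x : Fin q → H) : TP F H (k + q) :=
  ∑ ρ : Equiv.Perm (Fin k), ∑ τ : Equiv.Perm (Fin q),
    (Equiv.Perm.sign τ : ℤ) •
      (PiTensorProduct.tprod F (Fin.append (h ∘ ρ) (x ∘ τ)) : TP F H (k + q))


/-!
On `H_{k,q}` with `k, q ≥ 1` the operators satisfy the homotopy identity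
`d̆*_q d̆_q + d̆_{q-1} d̆*_{q-1} = (k + q) · id`, so every `v` with `d̆*_{q-1} v = 0` equals
`d̆*_q (d̆_q v / n)`; conversely `d̆* ∘ d̆*` vanishes because it symmetrises over two positions that it has
just skew-symmetrised. The identity lives in the group algebra of `S_n`: with `E = S_a A_b` the
projector onto `H_{k,q}`, `p` the last symmetric and `r` the first skew position, splitting
`S_{a ∪ {r}}` and `A_{b ∪ {p}}` into cosets of `S_a` and `S_b` gives
`E A_{b ∪ {p}} E = (E - q E (p r) E) / (q + 1)` and `E S_{a ∪ {r}} E = (E + k E (p r) E) / (k + 1)`,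
and the `E (p r) E` terms cancel.
-/

section PermsOn

variable {n : ℕ} {a b c : Finset (Fin n)} {σ τ : Equiv.Perm (Fin n)}

theorem mem_permsOn : σ ∈ permsOn n a ↔ ∀ i ∉ a, σ i = i := by
  simp [permsOn]

theorem one_mem_permsOn (a : Finset (Fin n)) : 1 ∈ permsOn n a := by
  simp [mem_permsOn]

theorem mul_mem_permsOn (hσ : σ ∈ permsOn n a) (hτ : τ ∈ permsOn n a) :
    σ * τ ∈ permsOn n a := by
  rw [mem_permsOn] at *
  intro i hi
  simp [hτ i hi, hσ i hi]

theorem inv_mem_permsOn (hσ : σ ∈ permsOn n a) : σ⁻¹ ∈ permsOn n a := by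
  rw [mem_permsOn] at *
  intro i hi
  rw [Equiv.Perm.inv_eq_iff_eq, hσ i hi]

theorem permsOn_mono (h : a ⊆ b) : permsOn n a ⊆ permsOn n b := fun _ hσ ↦
  mem_permsOn.2 fun i hi ↦ mem_permsOn.1 hσ i (fun hia ↦ hi (h hia))

theorem apply_mem_of_mem_permsOn (hσ : σ ∈ permsOn n a) {i : Fin n} (hi : i ∈ a) : σ i ∈ a := by
  by_contra h
  exact h (by rwa [σ.injective (mem_permsOn.1 hσ _ h)])

theorem swap_mem_permsOn {i j : Fin n} (hi : i ∈ a) (hj : j ∈ a) :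
    Equiv.swap i j ∈ permsOn n a :=
  mem_permsOn.2 fun _ hl ↦ Equiv.swap_apply_of_ne_of_ne (by rintro rfl; exact hl hi)
    (by rintro rfl; exact hl hj)

theorem card_permsOn (a : Finset (Fin n)) : (permsOn n a).card = a.card.factorial := by
  rw [← Fintype.card_coe, ← Fintype.card_coe a, ← Fintype.card_perm]
  exact Fintype.card_congr ((Equiv.subtypeEquivRight fun _ ↦ mem_permsOn).trans
    (Equiv.Perm.subtypeEquivSubtypePerm (· ∈ a)).symm)

theorem permsOn_eq_singleton_one (h : a.card ≤ 1) : permsOn n a = {1} := by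
  obtain ⟨σ, hσ⟩ := Finset.card_eq_one.1 <| (card_permsOn a).trans <|
    Nat.factorial_eq_one.2 h
  have h1 := one_mem_permsOn (n := n) a
  rw [hσ, Finset.mem_singleton] at h1
  rw [hσ, h1]

theorem commute_of_mem_permsOn (hab : Disjoint a b) (hσ : σ ∈ permsOn n a)
    (hτ : τ ∈ permsOn n b) : Commute σ τ :=
  Equiv.Perm.Disjoint.commute fun i ↦ by
    by_cases hi : i ∈ a
    · exact Or.inr (mem_permsOn.1 hτ i (Finset.disjoint_left.1 hab hi))
    · exact Or.inl (mem_permsOn.1 hσ i hi)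

theorem sum_permsOn_mul_left {M : Type*} [AddCommMonoid M] (hσ : σ ∈ permsOn n a)
    (f : Equiv.Perm (Fin n) → M) :
    ∑ τ ∈ permsOn n a, f (σ * τ) = ∑ τ ∈ permsOn n a, f τ :=
  Finset.sum_nbij' (σ * ·) (σ⁻¹ * ·) (fun _ hτ ↦ mul_mem_permsOn hσ hτ)
    (fun _ hτ ↦ mul_mem_permsOn (inv_mem_permsOn hσ) hτ) (fun _ _ ↦ by simp)
    (fun _ _ ↦ by simp) (fun _ _ ↦ rfl)

theorem sum_permsOn_mul_right {M : Type*} [AddCommMonoid M] (hσ : σ ∈ permsOn n a)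
    (f : Equiv.Perm (Fin n) → M) :
    ∑ τ ∈ permsOn n a, f (τ * σ) = ∑ τ ∈ permsOn n a, f τ :=
  Finset.sum_nbij' (· * σ) (· * σ⁻¹) (fun _ hτ ↦ mul_mem_permsOn hτ hσ)
    (fun _ hτ ↦ mul_mem_permsOn hτ (inv_mem_permsOn hσ)) (fun _ _ ↦ by simp)
    (fun _ _ ↦ by simp) (fun _ _ ↦ rfl)

theorem sum_permsOn_insert {M : Type*} [AddCommMonoid M] {x : Fin n} (hx : x ∉ c)
    (f : Equiv.Perm (Fin n) → M) :
    ∑ σ ∈ permsOn n (insert x c), f σ =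
      ∑ y ∈ insert x c, ∑ τ ∈ permsOn n c, f (Equiv.swap x y * τ) := by
  rw [← Finset.sum_product']
  symm
  refine Finset.sum_nbij' (fun yτ ↦ Equiv.swap x yτ.1 * yτ.2)
    (fun σ ↦ (σ x, Equiv.swap x (σ x) * σ)) ?_ ?_ ?_ ?_ (fun _ _ ↦ rfl)
  · rintro ⟨y, τ⟩ h
    rw [Finset.mem_product] at h
    exact mul_mem_permsOn (swap_mem_permsOn (Finset.mem_insert_self x c) h.1)
      (permsOn_mono (Finset.subset_insert x c) h.2)
  · intro σ hσ
    rw [Finset.mem_product]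
    have hσx := apply_mem_of_mem_permsOn hσ (Finset.mem_insert_self x c)
    refine ⟨hσx, mem_permsOn.2 fun i hi ↦ ?_⟩
    by_cases hix : i = x
    · simp [hix]
    · have hσi : σ i = i := mem_permsOn.1 hσ i (by simp [hix, hi])
      rw [Equiv.Perm.mul_apply, hσi, Equiv.swap_apply_of_ne_of_ne hix]
      rintro rfl
      exact hix (σ.injective hσi)
  · rintro ⟨y, τ⟩ h
    rw [Finset.mem_product] at h
    have hτx : τ x = x := mem_permsOn.1 h.2 x hx
    simp [hτx, ← mul_assoc]
  · intro σ _
    simp [← mul_assoc]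

end PermsOn

section Averaging

variable {n : ℕ} {K V : Type*} [Field K] [AddCommGroup V] [Module K V]
  (π : Equiv.Perm (Fin n) →* Module.End K V) (χ : Equiv.Perm (Fin n) →* ℤˣ)
  {a b c : Finset (Fin n)} {σ : Equiv.Perm (Fin n)} {E : Module.End K V}

-- With `χ = 1` this is the symmetriser `S_a`, with `χ = sign` the skew-symmetriser `A_a`.
def permAvg (a : Finset (Fin n)) : Module.End K V :=
  (a.card.factorial : K)⁻¹ • ∑ σ ∈ permsOn n a, χ σ • π σ

theorem rep_mul_permAvg (hσ : σ ∈ permsOn n a) : π σ * permAvg π χ a = χ σ • permAvg π χ a := by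
  have hterm : ∀ τ, π σ * (χ τ • π τ) = χ σ • (χ (σ * τ) • π (σ * τ)) := fun τ ↦ by
    rw [mul_smul_comm, smul_smul, map_mul, map_mul, ← mul_assoc, Int.units_mul_self, one_mul]
  rw [permAvg, mul_smul_comm, Finset.mul_sum, Finset.sum_congr rfl fun τ _ ↦ hterm τ,
    ← Finset.smul_sum, sum_permsOn_mul_left hσ fun τ ↦ χ τ • π τ, smul_comm]

theorem permAvg_mul_rep (hσ : σ ∈ permsOn n a) : permAvg π χ a * π σ = χ σ • permAvg π χ a := by
  have hterm : ∀ τ, (χ τ • π τ) * π σ = χ σ • (χ (τ * σ) • π (τ * σ)) := fun τ ↦ by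
    rw [smul_mul_assoc, smul_smul, map_mul, map_mul, mul_comm (χ τ), ← mul_assoc,
      Int.units_mul_self, one_mul]
  rw [permAvg, smul_mul_assoc, Finset.sum_mul, Finset.sum_congr rfl fun τ _ ↦ hterm τ,
    ← Finset.smul_sum, sum_permsOn_mul_right hσ fun τ ↦ χ τ • π τ, smul_comm]

theorem commute_rep_permAvg (hab : Disjoint a b) (hσ : σ ∈ permsOn n a) :
    Commute (π σ) (permAvg π χ b) := by
  simp only [Commute, SemiconjBy, permAvg, mul_smul_comm, smul_mul_assoc, Finset.mul_sum,
    Finset.sum_mul, ← map_mul]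
  congr 1
  refine Finset.sum_congr rfl fun τ hτ ↦ ?_
  rw [(commute_of_mem_permsOn hab hσ hτ).eq]

theorem commute_permAvg (ψ : Equiv.Perm (Fin n) →* ℤˣ) (hab : Disjoint a b) :
    Commute (permAvg π χ a) (permAvg π ψ b) :=
  .smul_left (.sum_left _ _ _ fun _ hσ ↦ .smul_left (commute_rep_permAvg π ψ hab hσ) _) _

theorem permAvg_eq_one (h : a.card ≤ 1) : permAvg π χ a = 1 := by
  simp [permAvg, permsOn_eq_singleton_one h, Nat.factorial_eq_one.2 h]

theorem smul_mul_rep_conj_mul (hl : ∀ σ ∈ permsOn n c, π σ * E = χ σ • E)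
    (hr : ∀ σ ∈ permsOn n c, E * π σ = χ σ • E) {ρ : Equiv.Perm (Fin n)} (hρ : ρ ∈ permsOn n c)
    (s : Equiv.Perm (Fin n)) :
    χ (ρ * s * ρ⁻¹) • (E * π (ρ * s * ρ⁻¹) * E) = χ s • (E * π s * E) := by
  have hχ : χ (ρ * s * ρ⁻¹) = χ s := by simp [mul_right_comm]
  have hE : E * π (ρ * s * ρ⁻¹) * E = E * π ρ * π s * (π ρ⁻¹ * E) := by
    simp only [map_mul, mul_assoc]
  rw [hχ, hE, hr _ hρ, hl _ (inv_mem_permsOn hρ)]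
  congr 1
  rw [smul_mul_assoc, smul_mul_assoc, mul_smul_comm, smul_smul, ← map_mul, mul_inv_cancel,
    map_one, one_smul]

variable [CharZero K]

theorem permAvg_mul_permAvg_eq_left (h : b ⊆ a) :
    permAvg π χ a * permAvg π χ b = permAvg π χ a := by
  have hterm : ∀ τ ∈ permsOn n b, permAvg π χ a * (χ τ • π τ) = permAvg π χ a := fun τ hτ ↦ by
    rw [mul_smul_comm, permAvg_mul_rep π χ (permsOn_mono h hτ), smul_smul, Int.units_mul_self,
      one_smul]
  rw [permAvg.eq_1 π χ b, mul_smul_comm, Finset.mul_sum, Finset.sum_congr rfl hterm,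
    Finset.sum_const, card_permsOn, ← Nat.cast_smul_eq_nsmul K, smul_smul,
    inv_mul_cancel₀ (Nat.cast_ne_zero.2 b.card.factorial_ne_zero), one_smul]

theorem permAvg_mul_permAvg_eq_right (h : b ⊆ a) :
    permAvg π χ b * permAvg π χ a = permAvg π χ a := by
  have hterm : ∀ τ ∈ permsOn n b, (χ τ • π τ) * permAvg π χ a = permAvg π χ a := fun τ hτ ↦ by
    rw [smul_mul_assoc, rep_mul_permAvg π χ (permsOn_mono h hτ), smul_smul, Int.units_mul_self,
      one_smul]
  rw [permAvg.eq_1 π χ b, smul_mul_assoc, Finset.sum_mul, Finset.sum_congr rfl hterm,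
    Finset.sum_const, card_permsOn, ← Nat.cast_smul_eq_nsmul K, smul_smul,
    inv_mul_cancel₀ (Nat.cast_ne_zero.2 b.card.factorial_ne_zero), one_smul]

theorem isIdempotentElem_permAvg (a : Finset (Fin n)) : IsIdempotentElem (permAvg π χ a) :=
  permAvg_mul_permAvg_eq_left π χ subset_rfl

theorem permAvg_one_mul_permAvg_sign_eq_zero {p r : Fin n} (hpr : p ≠ r) (hpa : p ∈ a)
    (hra : r ∈ a) (hpb : p ∈ b) (hrb : r ∈ b) :
    permAvg π 1 a * permAvg π Equiv.Perm.sign b = 0 := by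
  have h := congrArg (· * permAvg π Equiv.Perm.sign b)
    (permAvg_mul_rep π 1 (swap_mem_permsOn hpa hra))
  simp only [MonoidHom.one_apply, one_smul, mul_assoc] at h
  rw [rep_mul_permAvg π _ (swap_mem_permsOn hpb hrb), Equiv.Perm.sign_swap hpr, mul_smul_comm,
    Units.neg_smul, one_smul, neg_eq_iff_add_eq_zero, ← two_smul K] at h
  exact (smul_eq_zero.1 h).resolve_left two_ne_zero

theorem mul_permAvg_insert_mul {x y : Fin n} (hx : x ∉ c) (hy : y ∈ c)
    (hl : ∀ σ ∈ permsOn n c, π σ * E = χ σ • E) (hr : ∀ σ ∈ permsOn n c, E * π σ = χ σ • E) :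
    E * permAvg π χ (insert x c) * E = ((c.card + 1 : ℕ) : K)⁻¹ •
      (E * E + c.card • χ (Equiv.swap x y) • (E * π (Equiv.swap x y) * E)) := by
  set g : Fin n → Module.End K V := fun z ↦ χ (Equiv.swap x z) • (E * π (Equiv.swap x z) * E)
  have hgx : g x = E * E := by simp [g, ← Equiv.Perm.one_def]
  have hgc : ∀ z ∈ c, g z = g y := fun z hz ↦ by
    have hxy : x ≠ y := by rintro rfl; exact hx hy
    have hxz : x ≠ z := by rintro rfl; exact hx hz
    have hconj : Equiv.swap x z = Equiv.swap y z * Equiv.swap x y * (Equiv.swap y z)⁻¹ := by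
      rw [← Equiv.swap_apply_apply, Equiv.swap_apply_of_ne_of_ne hxy hxz,
        Equiv.swap_apply_left]
    simp only [g, hconj]
    exact smul_mul_rep_conj_mul π χ hl hr (swap_mem_permsOn hy hz) _
  have hcoset : ∀ z, ∀ τ ∈ permsOn n c,
      χ (Equiv.swap x z * τ) • (E * π (Equiv.swap x z * τ) * E) = g z := fun z τ hτ ↦ by
    rw [map_mul, map_mul, mul_assoc, mul_assoc, hl τ hτ, mul_smul_comm, mul_smul_comm, smul_smul,
      mul_assoc, Int.units_mul_self, mul_one]
    simp only [g, mul_assoc]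
  have hsum : ∑ σ ∈ permsOn n (insert x c), χ σ • (E * π σ * E) =
      c.card.factorial • (E * E + c.card • g y) := by
    rw [sum_permsOn_insert hx, Finset.sum_congr rfl fun z _ ↦ Finset.sum_congr rfl (hcoset z),
      Finset.sum_congr rfl fun z _ ↦ Finset.sum_const _, card_permsOn, ← Finset.smul_sum,
      Finset.sum_insert hx, hgx, Finset.sum_congr rfl hgc, Finset.sum_const]
  have hfac : ((insert x c).card.factorial : K)⁻¹ • c.card.factorial • (E * E + c.card • g y) =
      ((c.card + 1 : ℕ) : K)⁻¹ • (E * E + c.card • g y) := by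
    rw [Finset.card_insert_of_notMem hx, Nat.factorial_succ, ← Nat.cast_smul_eq_nsmul K,
      smul_smul, Nat.cast_mul, mul_inv, mul_assoc,
      inv_mul_cancel₀ (Nat.cast_ne_zero.2 c.card.factorial_ne_zero), mul_one]
  rw [← hfac, ← hsum, permAvg, mul_smul_comm, smul_mul_assoc, Finset.mul_sum, Finset.sum_mul]
  simp only [mul_smul_comm, smul_mul_assoc, mul_assoc]

end Averaging

section SymAlt

open Equiv.Perm (sign)

variable {n : ℕ} {K V : Type*} [Field K] [AddCommGroup V] [Module K V]
  (π : Equiv.Perm (Fin n) →* Module.End K V) {a b : Finset (Fin n)} {σ : Equiv.Perm (Fin n)}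

def symAlt (a b : Finset (Fin n)) : Module.End K V := permAvg π 1 a * permAvg π sign b

theorem rep_mul_symAlt_of_mem_left (hσ : σ ∈ permsOn n a) : π σ * symAlt π a b = symAlt π a b := by
  rw [symAlt, ← mul_assoc, rep_mul_permAvg π 1 hσ, MonoidHom.one_apply, one_smul]

theorem symAlt_mul_rep_of_mem_left (hab : Disjoint a b) (hσ : σ ∈ permsOn n a) :
    symAlt π a b * π σ = symAlt π a b := by
  rw [symAlt, mul_assoc, ← (commute_rep_permAvg π sign hab hσ).eq, ← mul_assoc,
    permAvg_mul_rep π 1 hσ, MonoidHom.one_apply, one_smul]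

theorem rep_mul_symAlt_of_mem_right (hab : Disjoint a b) (hσ : σ ∈ permsOn n b) :
    π σ * symAlt π a b = sign σ • symAlt π a b := by
  rw [symAlt, ← mul_assoc, (commute_rep_permAvg π 1 hab.symm hσ).eq, mul_assoc,
    rep_mul_permAvg π sign hσ, mul_smul_comm]

theorem symAlt_mul_rep_of_mem_right (hσ : σ ∈ permsOn n b) :
    symAlt π a b * π σ = sign σ • symAlt π a b := by
  rw [symAlt, mul_assoc, permAvg_mul_rep π sign hσ, mul_smul_comm]

variable [CharZero K]

theorem isIdempotentElem_symAlt (hab : Disjoint a b) : IsIdempotentElem (symAlt π a b) :=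
  .mul_of_commute (commute_permAvg π 1 sign hab) (isIdempotentElem_permAvg π 1 a)
    (isIdempotentElem_permAvg π sign b)

theorem symAlt_homotopy (hab : Disjoint a b) {p r : Fin n} (hp : p ∈ a) (hr : r ∈ b) :
    ((a.card * (b.card + 1) : ℕ) : K) •
        (permAvg π 1 a * permAvg π sign (insert p b) * symAlt π a b) +
      ((b.card * (a.card + 1) : ℕ) : K) •
        (permAvg π sign b * permAvg π 1 (insert r a) * symAlt π a b) =
      ((a.card + b.card : ℕ) : K) • symAlt π a b := by
  set E := symAlt π a b
  have hpb : p ∉ b := Finset.disjoint_left.1 hab hp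
  have hra : r ∉ a := Finset.disjoint_right.1 hab hr
  have hpr : p ≠ r := by rintro rfl; exact hpb hr
  have hAlt : permAvg π 1 a * permAvg π sign (insert p b) * E =
      ((b.card + 1 : ℕ) : K)⁻¹ • (E - b.card • (E * π (Equiv.swap p r) * E)) := by
    have hL : E * permAvg π sign (insert p b) = permAvg π 1 a * permAvg π sign (insert p b) := by
      simp only [E, symAlt, mul_assoc,
        permAvg_mul_permAvg_eq_right π sign (Finset.subset_insert p b)]
    rw [← hL, mul_permAvg_insert_mul π sign hpb hr (fun _ ↦ rep_mul_symAlt_of_mem_right π hab)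
      (fun _ ↦ symAlt_mul_rep_of_mem_right π), (isIdempotentElem_symAlt π hab).eq,
      Equiv.Perm.sign_swap hpr, Units.neg_smul, one_smul, smul_neg, ← sub_eq_add_neg]
  have hSym : permAvg π sign b * permAvg π 1 (insert r a) * E =
      ((a.card + 1 : ℕ) : K)⁻¹ • (E + a.card • (E * π (Equiv.swap p r) * E)) := by
    have hL : E * permAvg π 1 (insert r a) = permAvg π sign b * permAvg π 1 (insert r a) := by
      simp only [E, symAlt, (commute_permAvg π 1 sign hab).eq, mul_assoc,
        permAvg_mul_permAvg_eq_right π 1 (Finset.subset_insert r a)]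
    rw [← hL, mul_permAvg_insert_mul π 1 hra hp
      (fun σ hσ ↦ by rw [MonoidHom.one_apply, one_smul, rep_mul_symAlt_of_mem_left π hσ])
      (fun σ hσ ↦ by rw [MonoidHom.one_apply, one_smul, symAlt_mul_rep_of_mem_left π hab hσ]),
      (isIdempotentElem_symAlt π hab).eq, MonoidHom.one_apply, one_smul, Equiv.swap_comm]
  rw [hAlt, hSym]
  have hb : (b.card + 1 : K) ≠ 0 := Nat.cast_add_one_ne_zero _
  have ha : (a.card + 1 : K) ≠ 0 := Nat.cast_add_one_ne_zero _
  push_cast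
  match_scalars
  · field_simp
  · field_simp
    ring

end SymAlt

section TensorPower

open Equiv.Perm (sign)

omit [CharZero F] in
def permRep (n : ℕ) : Equiv.Perm (Fin n) →* Module.End F (TP F H n) where
  toFun := permMap F H n
  map_one' := by
    rw [permMap, show (1 : Equiv.Perm (Fin n)) = Equiv.refl (Fin n) from rfl,
      PiTensorProduct.reindex_refl]
    rfl
  map_mul' σ τ := by
    rw [permMap, show σ * τ = τ.trans σ from rfl, ← PiTensorProduct.reindex_trans]
    rfl

variable {F H} {n : ℕ} {a : Finset (Fin n)}

omit [CharZero F] in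
theorem symOn_eq_permAvg (a : Finset (Fin n)) : symOn F H n a = permAvg (permRep F H n) 1 a := by
  simp [symOn, permAvg, permRep]

omit [CharZero F] in
theorem altOn_eq_permAvg (a : Finset (Fin n)) :
    altOn F H n a = permAvg (permRep F H n) sign a := by
  simp [altOn, permAvg, permRep, Units.smul_def]

omit [CharZero F] in
theorem Hgen_eq_range_symAlt (a : Finset (Fin n)) :
    Hgen F H n a = LinearMap.range (symAlt (permRep F H n) a aᶜ) := by
  rw [Hgen, symOn_eq_permAvg, altOn_eq_permAvg]
  rfl

theorem symAlt_apply_of_mem_Hgen {v : TP F H n} (hv : v ∈ Hgen F H n a) :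
    symAlt (permRep F H n) a aᶜ v = v := by
  rw [Hgen_eq_range_symAlt] at hv
  exact (LinearMap.IsIdempotentElem.mem_range_iff
    (isIdempotentElem_symAlt _ disjoint_compl_right)).1 hv

end TensorPower

section Exactness

variable {F H} {n : ℕ} {a : Finset (Fin n)}

theorem exists_mem_Hgen_erase_symOn_eq {p r : Fin n} (hp : p ∈ a) (hr : r ∉ a)
    {v : TP F H n} (hv : v ∈ Hgen F H n a) (h0 : symOn F H n (insert r a) v = 0) :
    ∃ u ∈ Hgen F H n (a.erase p), symOn F H n a u = v := by
  have hcompl : (a.erase p)ᶜ = insert p aᶜ := by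
    ext i
    by_cases hi : i = p <;> simp [hi, hp]
  have key := LinearMap.congr_fun
    (symAlt_homotopy (permRep F H n) disjoint_compl_right hp (Finset.mem_compl.2 hr)) v
  rw [symOn_eq_permAvg] at h0
  simp only [LinearMap.add_apply, LinearMap.smul_apply, Module.End.mul_apply,
    symAlt_apply_of_mem_Hgen hv, h0, map_zero, smul_zero, add_zero] at key
  have hn : ((a.card + aᶜ.card : ℕ) : F) ≠ 0 :=
    Nat.cast_ne_zero.2 (Nat.pos_iff_ne_zero.1 (Nat.add_pos_left (Finset.card_pos.2 ⟨p, hp⟩) _))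
  refine ⟨((a.card + aᶜ.card : ℕ) : F)⁻¹ • ((a.card * (aᶜ.card + 1) : ℕ) : F) •
    symAlt (permRep F H n) (a.erase p) (a.erase p)ᶜ v, ?_, ?_⟩
  · rw [Hgen_eq_range_symAlt]
    exact Submodule.smul_mem _ _ (Submodule.smul_mem _ _ (LinearMap.mem_range_self _ _))
  · rw [map_smul, map_smul, symOn_eq_permAvg, symAlt, hcompl, Module.End.mul_apply,
      ← Module.End.mul_apply (permAvg _ 1 a),
      permAvg_mul_permAvg_eq_left _ 1 (a.erase_subset p), key, smul_smul,
      inv_mul_cancel₀ hn, one_smul]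

theorem symOn_insert_symOn_eq_zero {p r : Fin n} (hp : p ∈ a) (hr : r ∉ a) {u : TP F H n}
    (hu : u ∈ Hgen F H n (a.erase p)) : symOn F H n (insert r a) (symOn F H n a u) = 0 := by
  rw [Hgen_eq_range_symAlt] at hu
  obtain ⟨t, rfl⟩ := hu
  have hpr : p ≠ r := by rintro rfl; exact hr hp
  have hz := permAvg_one_mul_permAvg_sign_eq_zero (permRep F H n) hpr
    (Finset.mem_insert_of_mem hp) (Finset.mem_insert_self r a) (by simp)
    (by simp [hr] : r ∈ (a.erase p)ᶜ)
  rw [symOn_eq_permAvg, symOn_eq_permAvg, symAlt, ← Module.End.mul_apply, ← Module.End.mul_apply,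
    permAvg_mul_permAvg_eq_left _ 1 (Finset.subset_insert r a),
    ← mul_assoc, permAvg_mul_permAvg_eq_left _ 1
      ((a.erase_subset p).trans (Finset.subset_insert r a)), hz,
    LinearMap.zero_apply]

theorem exists_mem_Hgen_erase_symOn_univ_eq (p : Fin n) {w : TP F H n}
    (hw : w ∈ Hgen F H n Finset.univ) :
    ∃ u ∈ Hgen F H n (Finset.univ.erase p), symOn F H n Finset.univ u = w := by
  refine ⟨symAlt (permRep F H n) (Finset.univ.erase p) (Finset.univ.erase p)ᶜ w,
    by rw [Hgen_eq_range_symAlt]; exact LinearMap.mem_range_self _ _, ?_⟩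
  have hw' := symAlt_apply_of_mem_Hgen hw
  rw [symAlt, permAvg_eq_one _ _ (a := Finset.univᶜ) (by simp), mul_one] at hw'
  rw [symOn_eq_permAvg, symAlt, permAvg_eq_one _ _ (a := (Finset.univ.erase p)ᶜ) (by simp),
    mul_one, ← Module.End.mul_apply,
    permAvg_mul_permAvg_eq_left _ 1 (Finset.subset_univ _), hw']

end Exactness

section FirstSet

variable {n k : ℕ}

theorem mem_firstSet {i : Fin n} : i ∈ firstSet n k ↔ (i : ℕ) < k := by
  simp [firstSet]

theorem card_firstSet_le : (firstSet n k).card ≤ k := by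
  simpa using Finset.card_le_card_of_injOn Fin.val
    (fun i hi ↦ Finset.mem_range.2 (mem_firstSet.1 hi)) Fin.val_injective.injOn

theorem firstSet_of_le (h : n ≤ k) : firstSet n k = Finset.univ :=
  Finset.eq_univ_of_forall fun i ↦ mem_firstSet.2 (i.2.trans_le h)

theorem firstSet_succ (hk : k < n) : firstSet n (k + 1) = insert ⟨k, hk⟩ (firstSet n k) := by
  ext i
  simp only [Finset.mem_insert, mem_firstSet, Fin.ext_iff]
  omega

theorem firstSet_eq_erase (hk : k < n) : firstSet n k = (firstSet n (k + 1)).erase ⟨k, hk⟩ := by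
  rw [firstSet_succ hk, Finset.erase_insert (by simp [mem_firstSet])]

end FirstSet

section DStarOp

variable {F H} {n k : ℕ}

omit [CharZero F] in
theorem dStarOp_one : dStarOp F H n 1 = LinearMap.id := by
  rw [dStarOp, symOn_eq_permAvg, permAvg_eq_one _ _ card_firstSet_le, Nat.cast_one, one_smul]
  rfl

theorem exists_dStarOp_self_eq (hn : 1 ≤ n) {w : TP F H n} (hw : w ∈ Hmix F H n n) :
    ∃ v ∈ Hmix F H n (n - 1), dStarOp F H n n v = w := by
  have hn' : n - 1 < n := by omega
  rw [Hmix, firstSet_of_le le_rfl] at hw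
  obtain ⟨u, hu, rfl⟩ := exists_mem_Hgen_erase_symOn_univ_eq ⟨n - 1, hn'⟩ hw
  refine ⟨(n : F)⁻¹ • u, ?_, ?_⟩
  · rw [Hmix, firstSet_eq_erase hn', Nat.sub_add_cancel hn, firstSet_of_le le_rfl]
    exact Submodule.smul_mem _ _ hu
  · rw [dStarOp, firstSet_of_le le_rfl, LinearMap.smul_apply, map_smul, smul_smul,
      mul_inv_cancel₀ (Nat.cast_ne_zero.2 (by omega)), one_smul]

theorem dStarOp_eq_zero_iff_exists (hk : k + 1 < n) {v : TP F H n} (hv : v ∈ Hmix F H n (k + 1)) :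
    dStarOp F H n (k + 2) v = 0 ↔ ∃ u ∈ Hmix F H n k, dStarOp F H n (k + 1) u = v := by
  have hp : (⟨k, by omega⟩ : Fin n) ∈ firstSet n (k + 1) := mem_firstSet.2 k.lt_succ_self
  have hr : (⟨k + 1, hk⟩ : Fin n) ∉ firstSet n (k + 1) := by simp [mem_firstSet]
  rw [Hmix, firstSet_eq_erase (by omega), dStarOp, firstSet_succ hk, LinearMap.smul_apply,
    smul_eq_zero_iff_right (Nat.cast_ne_zero.2 (by omega))]
  constructor
  · intro h0
    obtain ⟨u, hu, rfl⟩ := exists_mem_Hgen_erase_symOn_eq hp hr hv h0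
    refine ⟨((k + 1 : ℕ) : F)⁻¹ • u, Submodule.smul_mem _ _ hu, ?_⟩
    rw [dStarOp, LinearMap.smul_apply, map_smul, smul_smul,
      mul_inv_cancel₀ (Nat.cast_ne_zero.2 (by omega)), one_smul]
  · rintro ⟨u, hu, rfl⟩
    rw [dStarOp, LinearMap.smul_apply, map_smul, symOn_insert_symOn_eq_zero hp hr hu, smul_zero]

end DStarOp

/-- Rawnsley; exactness of the d̆*-sequence: the sequence
`0 → H^{∧n} = H_{0,n} →^{d̆*_{n-1}} H_{1,n-1} →^{d̆*_{n-2}} ⋯ →^{d̆*_0} H_{n,0} = H^{⊙n} → 0`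
is exact: `d̆*_{n-1}` is injective, `d̆*_0` is surjective, and for `1 ≤ q ≤ n-1`,
`ker(d̆*_{q-1} : H_{n-q,q} → H_{n-q+1,q-1}) = im(d̆*_q : H_{n-q-1,q+1} → H_{n-q,q})`. -/
theorem dStarOp_sequence_exact (n : ℕ) (hn : 1 ≤ n) :
    (∀ v ∈ Hmix F H n 0, dStarOp F H n 1 v = 0 → v = 0) ∧
    (∀ w ∈ Hmix F H n n, ∃ v ∈ Hmix F H n (n - 1), dStarOp F H n n v = w) ∧
    (∀ q : ℕ, 1 ≤ q → q ≤ n - 1 → ∀ v ∈ Hmix F H n (n - q),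
      (dStarOp F H n (n - q + 1) v = 0 ↔
        ∃ u ∈ Hmix F H n (n - q - 1), dStarOp F H n (n - q) u = v)) := by
  refine ⟨fun v _ h ↦ by rwa [dStarOp_one] at h, fun w ↦ exists_dStarOp_self_eq hn, ?_⟩
  intro q hq1 hq2 v hv
  obtain ⟨k, hk⟩ : ∃ k, n - q = k + 1 := ⟨n - q - 1, by omega⟩
  rw [hk] at hv ⊢
  exact dStarOp_eq_zero_iff_exists (by omega) hv

end
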